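/- For integers ℓ, k ≥ 2, the length of the shortest negative cycle of the signed graph BQ̂(ℓ, 2k+1) equals min{2ℓ, 2k+2}. -/

import Mathlib

open scoped Classical

/-- Adjacency relation of the cylindrical grid `C_{ℓ×m}`: vertex `v_{i,j}` is adjacent to
`v_{i+1,j-1}` and `v_{i+1,j}` (second index mod `m`). -/
def gridRel (ℓ m : ℕ) (x y : Fin ℓ × ZMod m) : Prop :=
  (y.1 : ℕ) = (x.1 : ℕ) + 1 ∧ (y.2 = x.2 - 1 ∨ y.2 = x.2)

/-- The positive edges of `BQ̂(ℓ, 2k+1)`: `v_{1,j}` is joined to `v_{2,j+k}` by a positive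
edge. -/
def bqOddPos (ℓ k : ℕ) :
    Option (Fin ℓ × ZMod (2 * k + 1)) → Option (Fin ℓ × ZMod (2 * k + 1)) → Prop
  | some x, some y => (x.1 : ℕ) = 0 ∧ (y.1 : ℕ) = 1 ∧ y.2 = x.2 + (k : ZMod (2 * k + 1))
  | _, _ => False

/-- Generating relation for the signed bipartite graph `BQ̂(ℓ, 2k+1)`: the cylindrical grid
`C_{ℓ×(2k+1)}` with all edges negative, plus positive edges `v_{1,j}v_{2,j+k}`, plus a new
vertex `u` (encoded as `none`) joined by negative edges to all vertices `v_{ℓ,j}`. -/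
def bqOddRel (ℓ k : ℕ) :
    Option (Fin ℓ × ZMod (2 * k + 1)) → Option (Fin ℓ × ZMod (2 * k + 1)) → Prop
  | some x, some y => gridRel ℓ (2 * k + 1) x y ∨ bqOddPos ℓ k (some x) (some y)
  | some x, none => (x.1 : ℕ) = ℓ - 1
  | none, _ => False

/-- The underlying graph of the signed bipartite graph `BQ̂(ℓ, 2k+1)`. -/
def BQOdd (ℓ k : ℕ) : SimpleGraph (Option (Fin ℓ × ZMod (2 * k + 1))) :=
  SimpleGraph.fromRel (bqOddRel ℓ k)

/-- The number of negative edges along a closed walk `w` of a signed graph whose positive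
edges are those `uv` with `pos u v ∨ pos v u`. -/
noncomputable def negEdgeCount {V : Type*} {G : SimpleGraph V} (pos : V → V → Prop)
    {v : V} (w : G.Walk v v) : ℕ :=
  (w.darts.filter
    (fun d => decide (¬ (pos d.toProd.1 d.toProd.2 ∨ pos d.toProd.2 d.toProd.1)))).length


/-!
Rows give a grading in which every edge goes up one level (`u` sitting on level `ℓ`), so the
graph is bipartite and a closed walk through `u` and through row `0` has length at least `2ℓ`.
A closed walk with an odd number of negative edges has even length, hence an odd number of
positive edges, so it meets row `0`. If it avoids `u`, consider the height `i + 2j ∈ ℤ/(2k+1)` of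
`v_{i,j}`: a negative edge changes it by `±1` and a positive edge by `1 + 2k = 0`. Along the closed
walk these changes cancel, and an odd number of `±1`s can only sum to a multiple of `2k+1` if there
are at least `2k+1` of them. Both bounds are attained: by the zigzag between rows `0` and `1` closed
by one positive edge, and by the cycle up column `0`, through `u`, and down column `k`.
-/

theorem List.exists_intCast_eq_sum_of_forall_eq_one_or_neg_one {R : Type*} [AddGroupWithOne R]
    (l : List R) (h : ∀ x ∈ l, x = 1 ∨ x = -1) :
    ∃ s : ℤ, (s : R) = l.sum ∧ |s| ≤ l.length ∧ Even (s + l.length) := by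
  induction l with
  | nil => exact ⟨0, by simp⟩
  | cons x l ih =>
    obtain ⟨s, hs, habs, hev⟩ := ih fun y hy => h y (List.mem_cons_of_mem x hy)
    simp only [List.sum_cons, List.length_cons]
    push_cast
    rcases h x List.mem_cons_self with rfl | rfl
    · refine ⟨1 + s, by push_cast [hs]; rfl, by linarith [abs_add_le 1 s, abs_one (α := ℤ)], ?_⟩
      rw [show 1 + s + (l.length + 1 : ℤ) = s + l.length + 2 by ring]
      exact hev.add even_two
    · refine ⟨-1 + s, by push_cast [hs]; rfl, ?_, ?_⟩
      · linarith [abs_add_le (-1) s, abs_neg (1 : ℤ), abs_one (α := ℤ)]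
      · rwa [show -1 + s + (l.length + 1 : ℤ) = s + l.length by ring]

theorem ZMod.le_length_of_sum_eq_zero {m : ℕ} (l : List (ZMod m)) (h : ∀ x ∈ l, x = 1 ∨ x = -1)
    (hodd : Odd l.length) (hsum : l.sum = 0) : m ≤ l.length := by
  obtain ⟨s, hs, habs, hev⟩ := l.exists_intCast_eq_sum_of_forall_eq_one_or_neg_one h
  have hdvd : (m : ℤ) ∣ s := (ZMod.intCast_zmod_eq_zero_iff_dvd s m).1 (hs.trans hsum)
  have hs0 : s ≠ 0 := by
    rintro rfl
    exact Nat.not_even_iff_odd.2 hodd (by simpa using hev)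
  have := Int.le_of_dvd (abs_pos.2 hs0) ((dvd_abs _ _).2 hdvd)
  omega

theorem ZMod.natCast_ne_zero_of_lt {n a : ℕ} (ha : 0 < a) (han : a < n) : (a : ZMod n) ≠ 0 :=
  fun h => absurd (Nat.le_of_dvd ha ((ZMod.natCast_eq_zero_iff a n).1 h)) (by omega)

namespace SimpleGraph

variable {V : Type*} {G : SimpleGraph V}

namespace Walk

theorem sum_darts_sub {A : Type*} [AddCommGroup A] (g : V → A) {a b : V} (w : G.Walk a b) :
    (w.darts.map fun d => g d.snd - g d.fst).sum = g b - g a := by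
  induction w with
  | nil => simp
  | cons h p ih =>
    simp only [darts_cons, List.map_cons, List.sum_cons, ih]
    abel

theorem abs_sub_le_length {g : V → ℤ} (hg : ∀ ⦃x y⦄, G.Adj x y → |g y - g x| ≤ 1) {a b : V}
    (w : G.Walk a b) : |g b - g a| ≤ w.length := by
  induction w with
  | nil => simp
  | @cons a c b h p ih =>
    have := abs_sub_le (g b) (g c) (g a)
    have := hg h
    push_cast [length_cons]
    linarith

theorem two_mul_abs_sub_le_length {g : V → ℤ} (hg : ∀ ⦃x y⦄, G.Adj x y → |g y - g x| ≤ 1)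
    {v x y : V} (w : G.Walk v v) (hx : x ∈ w.support) (hy : y ∈ w.support) :
    2 * |g y - g x| ≤ w.length := by
  set c := w.rotate x hx
  have hy' : y ∈ c.support := (mem_support_rotate_iff w x hx).2 hy
  have hsplit : (c.takeUntil y hy').length + (c.dropUntil y hy').length = w.length := by
    rw [← length_append, take_spec, length_rotate]
  have h₁ := abs_sub_le_length hg (c.takeUntil y hy')
  have h₂ := abs_sub_le_length hg (c.dropUntil y hy')
  rw [abs_sub_comm] at h₂
  have : ((c.takeUntil y hy').length : ℤ) + (c.dropUntil y hy').length = w.length := by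
    exact_mod_cast hsplit
  linarith

def ofSeq (f : ℕ → V) : (n : ℕ) → (∀ i < n, G.Adj (f i) (f (i + 1))) → G.Walk (f 0) (f n)
  | 0, _ => nil
  | n + 1, h => (ofSeq f n fun i hi => h i (by omega)).concat (h n (by omega))

variable (f : ℕ → V)

@[simp]
theorem length_ofSeq (n : ℕ) (h : ∀ i < n, G.Adj (f i) (f (i + 1))) :
    (ofSeq f n h).length = n := by
  induction n with
  | zero => rfl
  | succ n ih => simp [ofSeq, ih]

theorem support_ofSeq (n : ℕ) (h : ∀ i < n, G.Adj (f i) (f (i + 1))) :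
    (ofSeq f n h).support = (List.range (n + 1)).map f := by
  induction n with
  | zero => rfl
  | succ n ih => simp [ofSeq, ih, List.range_succ]

theorem exists_of_mem_darts_ofSeq {n : ℕ} {h : ∀ i < n, G.Adj (f i) (f (i + 1))} {d : G.Dart}
    (hd : d ∈ (ofSeq f n h).darts) : ∃ i < n, d.fst = f i ∧ d.snd = f (i + 1) := by
  induction n with
  | zero => simp [ofSeq] at hd
  | succ n ih =>
    simp only [ofSeq, darts_concat, List.concat_eq_append, List.mem_append,
      List.mem_singleton] at hd
    rcases hd with hd | rfl
    · obtain ⟨i, hi, hfst, hsnd⟩ := ih hd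
      exact ⟨i, by omega, hfst, hsnd⟩
    · exact ⟨n, by omega, rfl, rfl⟩

end Walk

section Signed

variable (pos : V → V → Prop) {v : V}

theorem negEdgeCount_lt_length {w : G.Walk v v} (heven : Even w.length)
    (hodd : Odd (negEdgeCount pos w)) : negEdgeCount pos w < w.length := by
  refine lt_of_le_of_ne ((List.length_filter_le _ _).trans_eq w.length_darts) fun h => ?_
  rw [h] at hodd
  exact Nat.not_even_iff_odd.2 hodd heven

theorem exists_mem_darts_of_negEdgeCount_lt {w : G.Walk v v}
    (h : negEdgeCount pos w < w.length) :
    ∃ d ∈ w.darts, pos d.fst d.snd ∨ pos d.snd d.fst := by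
  rw [negEdgeCount, ← w.length_darts, List.length_filter_lt_length_iff_exists] at h
  simpa only [decide_eq_true_eq, not_not] using h

theorem exists_isCycle_negEdgeCount_eq (f : ℕ → V) {n : ℕ} (hn : 2 ≤ n)
    (hf : Set.InjOn f (Set.Iic n))
    (hneg : ∀ i < n, G.Adj (f i) (f (i + 1)) ∧ ¬ (pos (f i) (f (i + 1)) ∨ pos (f (i + 1)) (f i)))
    (hclose : G.Adj (f n) (f 0)) (hpos : pos (f n) (f 0) ∨ pos (f 0) (f n)) :
    ∃ w : G.Walk (f n) (f n), w.IsCycle ∧ w.length = n + 1 ∧ negEdgeCount pos w = n := by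
  set p := Walk.ofSeq f n fun i hi => (hneg i hi).1
  have hmem {i : ℕ} (hi : i ∈ List.range (n + 1)) : i ∈ Set.Iic n :=
    Nat.lt_succ_iff.1 (List.mem_range.1 hi)
  refine ⟨.cons hclose p, ?_, by simp [p], ?_⟩
  · rw [Walk.cons_isCycle_iff, Walk.isPath_def, Walk.support_ofSeq]
    refine ⟨List.nodup_range.map_on fun i hi j hj => hf (hmem hi) (hmem hj), fun he => ?_⟩
    obtain ⟨d, hd, hde⟩ := List.mem_map.1 he
    obtain ⟨i, hi, hfst, hsnd⟩ := Walk.exists_of_mem_darts_ofSeq f hd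
    rw [Dart.edge, hfst, hsnd, Sym2.eq_iff] at hde
    rcases hde with ⟨h₁, -⟩ | ⟨h₁, h₂⟩
    · have := hf (by simp; omega) (by simp) h₁
      omega
    · have := hf (by simp; omega) (by simp) h₁
      have := hf (by simp; omega) (by simp) h₂
      omega
  · rw [negEdgeCount, Walk.darts_cons,
      List.filter_cons_of_neg (by simpa only [decide_eq_true_eq, not_not]),
      List.filter_eq_self.2, Walk.length_darts, Walk.length_ofSeq]
    intro d hd
    obtain ⟨i, hi, hfst, hsnd⟩ := Walk.exists_of_mem_darts_ofSeq f hd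
    simpa [hfst, hsnd] using (hneg i hi).2

end Signed

end SimpleGraph

namespace BQOdd

open SimpleGraph

variable {ℓ k : ℕ}

def row : Option (Fin ℓ × ZMod (2 * k + 1)) → ℤ
  | none => ℓ
  | some x => (x.1 : ℕ)

/-- `u` gets a junk height: heights are only compared along walks avoiding `u`. -/
def height : Option (Fin ℓ × ZMod (2 * k + 1)) → ZMod (2 * k + 1)
  | none => 0
  | some x => ((x.1 : ℕ) : ZMod (2 * k + 1)) + 2 * x.2

theorem row_eq_add_one_of_rel {a b : Option (Fin ℓ × ZMod (2 * k + 1))}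
    (h : bqOddRel ℓ k a b) : row b = row a + 1 := by
  match a, b, h with
  | some x, some y, .inl h => simp [row, h.1]
  | some x, some y, .inr h => simp [row, h.1, h.2.1]
  | some x, none, h =>
    have : (x.1 : ℕ) = ℓ - 1 := h
    simp only [row]
    omega

theorem abs_row_sub_row_of_adj {a b : Option (Fin ℓ × ZMod (2 * k + 1))}
    (h : (BQOdd ℓ k).Adj a b) : |row b - row a| = 1 := by
  rcases ((fromRel_adj _ a b).1 h).2 with h | h <;> rw [row_eq_add_one_of_rel h] <;> simp

theorem even_length {v : Option (Fin ℓ × ZMod (2 * k + 1))} (w : (BQOdd ℓ k).Walk v v) :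
    Even w.length := by
  let c : (BQOdd ℓ k).Coloring Bool := Coloring.mk (fun a => decide (Even (row a))) fun h => by
    rcases (abs_eq zero_le_one).1 (abs_row_sub_row_of_adj h) with h | h <;>
      simp [sub_eq_iff_eq_add.1 h, parity_simps, - Int.not_even_iff_odd]
  exact (c.even_length_iff_congr w).2 Iff.rfl

theorem row_eq_zero_of_pos {a b : Option (Fin ℓ × ZMod (2 * k + 1))} (h : bqOddPos ℓ k a b) :
    row a = 0 := by
  match a, b, h with
  | some x, some y, h => simp [row, h.1]

theorem two_mul_le_length {v : Option (Fin ℓ × ZMod (2 * k + 1))} (w : (BQOdd ℓ k).Walk v v)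
    (hnone : none ∈ w.support) {d : (BQOdd ℓ k).Dart} (hd : d ∈ w.darts)
    (hpos : bqOddPos ℓ k d.fst d.snd ∨ bqOddPos ℓ k d.snd d.fst) : 2 * ℓ ≤ w.length := by
  obtain ⟨x, hx, hx0⟩ : ∃ x ∈ w.support, row x = 0 := by
    rcases hpos with h | h
    · exact ⟨_, w.dart_fst_mem_support_of_mem_darts hd, row_eq_zero_of_pos h⟩
    · exact ⟨_, w.dart_snd_mem_support_of_mem_darts hd, row_eq_zero_of_pos h⟩
  have := w.two_mul_abs_sub_le_length (fun _ _ h => (abs_row_sub_row_of_adj h).le) hx hnone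
  rw [hx0, row, sub_zero, Nat.abs_cast] at this
  exact_mod_cast this

theorem height_sub_eq_zero_of_pos {a b : Option (Fin ℓ × ZMod (2 * k + 1))}
    (h : bqOddPos ℓ k a b ∨ bqOddPos ℓ k b a) : height b - height a = 0 := by
  have key : ∀ x y : Fin ℓ × ZMod (2 * k + 1), bqOddPos ℓ k (some x) (some y) →
      height (some y) - height (some x) = 0 := by
    rintro x y ⟨hx, hy, hj⟩
    have := ZMod.natCast_self (2 * k + 1)
    simp only [height, hx, hy, hj]
    push_cast at this ⊢
    linear_combination this
  match a, b, h with
  | some x, some y, .inl h => exact key x y h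
  | some x, some y, .inr h => rw [← neg_sub, key y x h, neg_zero]

theorem height_sub_of_gridRel {x y : Fin ℓ × ZMod (2 * k + 1)} (h : gridRel ℓ (2 * k + 1) x y) :
    height (some y) - height (some x) = 1 ∨ height (some y) - height (some x) = -1 := by
  obtain ⟨hrow, hj | hj⟩ := h
  · right; simp only [height, hrow, hj]; push_cast; ring
  · left; simp only [height, hrow, hj]; push_cast; ring

theorem height_sub_of_adj_of_not_pos {a b : Option (Fin ℓ × ZMod (2 * k + 1))}
    (h : (BQOdd ℓ k).Adj a b) (ha : a ≠ none) (hb : b ≠ none)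
    (hneg : ¬ (bqOddPos ℓ k a b ∨ bqOddPos ℓ k b a)) :
    height b - height a = 1 ∨ height b - height a = -1 := by
  obtain ⟨x, rfl⟩ := Option.ne_none_iff_exists'.1 ha
  obtain ⟨y, rfl⟩ := Option.ne_none_iff_exists'.1 hb
  rcases ((fromRel_adj _ _ _).1 h).2 with (h | h) | (h | h)
  · exact height_sub_of_gridRel h
  · exact absurd (.inl h) hneg
  · rw [← neg_sub]
    rcases height_sub_of_gridRel h with h | h <;> simp [h]
  · exact absurd (.inr h) hneg

theorem le_negEdgeCount {v : Option (Fin ℓ × ZMod (2 * k + 1))} (w : (BQOdd ℓ k).Walk v v)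
    (hnone : none ∉ w.support) (hodd : Odd (negEdgeCount (bqOddPos ℓ k) w)) :
    2 * k + 1 ≤ negEdgeCount (bqOddPos ℓ k) w := by
  let IsNeg (d : (BQOdd ℓ k).Dart) : Prop := ¬ (bqOddPos ℓ k d.fst d.snd ∨ bqOddPos ℓ k d.snd d.fst)
  let δ (d : (BQOdd ℓ k).Dart) : ZMod (2 * k + 1) := height d.snd - height d.fst
  have hpos : ((w.darts.filter fun d => ¬ IsNeg d).map δ).sum = 0 := by
    refine List.sum_eq_zero fun x hx => ?_
    obtain ⟨d, hd, rfl⟩ := List.mem_map.1 hx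
    exact height_sub_eq_zero_of_pos (by simpa [IsNeg] using (List.mem_filter.1 hd).2)
  have hsum : ((w.darts.filter IsNeg).map δ).sum = 0 := by
    have := w.sum_darts_sub height
    rwa [sub_self, ← List.sum_map_filter_add_sum_map_filter_not IsNeg, hpos, add_zero] at this
  have hunit : ∀ x ∈ (w.darts.filter IsNeg).map δ, x = 1 ∨ x = -1 := by
    intro x hx
    obtain ⟨d, hd, rfl⟩ := List.mem_map.1 hx
    obtain ⟨hd, hneg⟩ := List.mem_filter.1 hd
    have hmem := w.dart_fst_mem_support_of_mem_darts hd
    have hmem' := w.dart_snd_mem_support_of_mem_darts hd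
    exact height_sub_of_adj_of_not_pos d.adj (by rintro h; exact hnone (h ▸ hmem))
      (by rintro h; exact hnone (h ▸ hmem')) (of_decide_eq_true hneg)
  have hlen : ((w.darts.filter IsNeg).map δ).length = negEdgeCount (bqOddPos ℓ k) w :=
    List.length_map _
  rw [← hlen] at hodd ⊢
  exact ZMod.le_length_of_sum_eq_zero _ hunit hodd hsum

theorem min_le_length {v : Option (Fin ℓ × ZMod (2 * k + 1))} (w : (BQOdd ℓ k).Walk v v)
    (hodd : Odd (negEdgeCount (bqOddPos ℓ k) w)) : min (2 * ℓ) (2 * k + 2) ≤ w.length := by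
  have hlt := negEdgeCount_lt_length _ (even_length w) hodd
  obtain ⟨d, hd, hpos⟩ := exists_mem_darts_of_negEdgeCount_lt _ hlt
  by_cases hnone : none ∈ w.support
  · exact (min_le_left _ _).trans (two_mul_le_length w hnone hd hpos)
  · have := le_negEdgeCount w hnone hodd
    exact (min_le_right _ _).trans (by omega)

theorem adj_of_gridRel {x y : Fin ℓ × ZMod (2 * k + 1)} (h : gridRel ℓ (2 * k + 1) x y) :
    (BQOdd ℓ k).Adj (some x) (some y) := by
  refine (fromRel_adj _ _ _).2 ⟨?_, .inl (.inl h)⟩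
  rintro ⟨⟩
  exact absurd h.1 (by omega)

theorem not_pos_of_gridRel (hk : 1 ≤ k) {x y : Fin ℓ × ZMod (2 * k + 1)}
    (h : gridRel ℓ (2 * k + 1) x y) :
    ¬ (bqOddPos ℓ k (some x) (some y) ∨ bqOddPos ℓ k (some y) (some x)) := by
  rintro (⟨-, -, hk'⟩ | ⟨hy, -, -⟩)
  · rcases h.2 with hj | hj
    · refine ZMod.natCast_ne_zero_of_lt (n := 2 * k + 1) (a := k + 1) (by omega) (by omega) ?_
      push_cast
      linear_combination hj - hk'
    · exact ZMod.natCast_ne_zero_of_lt (n := 2 * k + 1) (a := k) (by omega) (by omega)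
        (by linear_combination hj - hk')
  · exact absurd h.1 (by omega)

theorem adj_none {x : Fin ℓ × ZMod (2 * k + 1)} (h : (x.1 : ℕ) = ℓ - 1) :
    (BQOdd ℓ k).Adj (some x) none :=
  (fromRel_adj _ _ _).2 ⟨by simp, .inl h⟩

theorem not_pos_none (a : Option (Fin ℓ × ZMod (2 * k + 1))) :
    ¬ (bqOddPos ℓ k a none ∨ bqOddPos ℓ k none a) := by
  cases a <;> simp [bqOddPos]

theorem adj_of_pos {a b : Option (Fin ℓ × ZMod (2 * k + 1))} (h : bqOddPos ℓ k a b) :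
    (BQOdd ℓ k).Adj a b := by
  match a, b, h with
  | some x, some y, h =>
    refine (fromRel_adj _ _ _).2 ⟨?_, .inl (.inr h)⟩
    rintro ⟨⟩
    exact absurd (h.1.symm.trans h.2.1) zero_ne_one

theorem exists_negCycle_length_eq_two_mul_add_two (hℓ : 2 ≤ ℓ) (hk : 1 ≤ k) :
    ∃ (v : Option (Fin ℓ × ZMod (2 * k + 1))) (w : (BQOdd ℓ k).Walk v v),
      w.IsCycle ∧ Odd (negEdgeCount (bqOddPos ℓ k) w) ∧ w.length = 2 * k + 2 := by
  let g (i : ℕ) : Fin ℓ × ZMod (2 * k + 1) := (⟨i % 2, by omega⟩, ((i / 2 : ℕ) : ZMod (2 * k + 1)))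
  have hinj : Set.InjOn (some ∘ g) (Set.Iic (2 * k + 1)) := by
    refine Set.LeftInvOn.injOn (f₁' := fun a => a.elim 0 fun x => 2 * x.2.val + x.1) fun i hi => ?_
    have : i / 2 < 2 * k + 1 := by simp only [Set.mem_Iic] at hi; omega
    simp only [Function.comp, Option.elim, g, ZMod.val_cast_of_lt this]
    omega
  have hstep (i : ℕ) (_ : i < 2 * k + 1) : (BQOdd ℓ k).Adj (some (g i)) (some (g (i + 1))) ∧
      ¬ (bqOddPos ℓ k (some (g i)) (some (g (i + 1))) ∨
        bqOddPos ℓ k (some (g (i + 1))) (some (g i))) := by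
    rcases Nat.even_or_odd' i with ⟨t, rfl | rfl⟩
    · have h : gridRel ℓ (2 * k + 1) (g (2 * t)) (g (2 * t + 1)) := by
        refine ⟨by simp only [g]; omega, .inr ?_⟩
        simp only [g, show (2 * t + 1) / 2 = t by omega, show 2 * t / 2 = t by omega]
      exact ⟨adj_of_gridRel h, not_pos_of_gridRel hk h⟩
    · have h : gridRel ℓ (2 * k + 1) (g (2 * t + 1 + 1)) (g (2 * t + 1)) := by
        refine ⟨by simp only [g]; omega, .inl ?_⟩
        simp only [g, show (2 * t + 1) / 2 = t by omega, show (2 * t + 1 + 1) / 2 = t + 1 by omega]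
        push_cast
        ring
      exact ⟨(adj_of_gridRel h).symm, fun h' => not_pos_of_gridRel hk h h'.symm⟩
  have hpos : bqOddPos ℓ k (some (g 0)) (some (g (2 * k + 1))) := by
    refine ⟨rfl, by simp only [g]; omega, ?_⟩
    simp only [g, show (2 * k + 1) / 2 = k by omega]
    simp
  obtain ⟨w, hw, hlen, hneg⟩ := exists_isCycle_negEdgeCount_eq (bqOddPos ℓ k) (some ∘ g)
    (by omega) hinj hstep (adj_of_pos hpos).symm (.inr hpos)
  exact ⟨_, w, hw, by rw [hneg]; exact odd_two_mul_add_one k, hlen⟩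

theorem exists_negCycle_length_eq_two_mul (hℓ : 2 ≤ ℓ) (hk : 1 ≤ k) :
    ∃ (v : Option (Fin ℓ × ZMod (2 * k + 1))) (w : (BQOdd ℓ k).Walk v v),
      w.IsCycle ∧ Odd (negEdgeCount (bqOddPos ℓ k) w) ∧ w.length = 2 * ℓ := by
  have hk0 : (k : ZMod (2 * k + 1)) ≠ 0 := ZMod.natCast_ne_zero_of_lt (by omega) (by omega)
  let f (i : ℕ) : Option (Fin ℓ × ZMod (2 * k + 1)) :=
    if h : i < ℓ then some (⟨i, h⟩, 0)
    else if h' : i = ℓ then none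
    else some (⟨2 * ℓ - i, by omega⟩, k)
  have hup (i : ℕ) (h : i < ℓ) : f i = some (⟨i, h⟩, 0) := dif_pos h
  have hu : f ℓ = none := by simp [f]
  have hdown (i : ℕ) (h : ℓ < i) :
      f i = some ((⟨2 * ℓ - i, by omega⟩ : Fin ℓ), (k : ZMod (2 * k + 1))) := by
    simp only [f, dif_neg (show ¬ i < ℓ by omega), dif_neg (show i ≠ ℓ by omega)]
  have hinj : Set.InjOn f (Set.Iic (2 * ℓ - 1)) := by
    refine Set.LeftInvOn.injOn
      (f₁' := fun a => a.elim ℓ fun x => if x.2 = 0 then x.1 else 2 * ℓ - x.1) fun i hi => ?_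
    simp only [Set.mem_Iic] at hi
    rcases lt_trichotomy i ℓ with h | rfl | h
    · simp [hup i h]
    · simp [hu]
    · simp only [hdown i h, Option.elim, if_neg hk0]
      omega
  have hstep (i : ℕ) (hi : i < 2 * ℓ - 1) : (BQOdd ℓ k).Adj (f i) (f (i + 1)) ∧
      ¬ (bqOddPos ℓ k (f i) (f (i + 1)) ∨ bqOddPos ℓ k (f (i + 1)) (f i)) := by
    rcases lt_trichotomy (i + 1) ℓ with h | h | h
    · have hg : gridRel ℓ (2 * k + 1) (⟨i, by omega⟩, 0) (⟨i + 1, h⟩, 0) := ⟨rfl, .inr rfl⟩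
      rw [hup i (by omega), hup (i + 1) h]
      exact ⟨adj_of_gridRel hg, not_pos_of_gridRel hk hg⟩
    · rw [hup i (by omega), h, hu]
      exact ⟨adj_none (by simp; omega), not_pos_none _⟩
    rcases (Nat.lt_succ_iff.1 h).eq_or_lt with h | h
    · rw [← h, hu, hdown (ℓ + 1) (by omega)]
      exact ⟨(adj_none (by simp; omega)).symm, fun h' => not_pos_none _ h'.symm⟩
    · have hg : gridRel ℓ (2 * k + 1) (⟨2 * ℓ - (i + 1), by omega⟩, k) (⟨2 * ℓ - i, by omega⟩, k) :=
        ⟨by simp only; omega, .inr rfl⟩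
      rw [hdown i h, hdown (i + 1) (by omega)]
      exact ⟨(adj_of_gridRel hg).symm, fun h' => not_pos_of_gridRel hk hg h'.symm⟩
  have hpos : bqOddPos ℓ k (f 0) (f (2 * ℓ - 1)) := by
    rw [hup 0 (by omega), hdown _ (by omega)]
    exact ⟨rfl, by simp only; omega, by simp⟩
  obtain ⟨w, hw, hlen, hneg⟩ := exists_isCycle_negEdgeCount_eq (bqOddPos ℓ k) f
    (by omega) hinj hstep (adj_of_pos hpos).symm (.inr hpos)
  exact ⟨_, w, hw, by rw [hneg]; exact ⟨ℓ - 1, by omega⟩, by omega⟩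

end BQOdd

/-- For integers `ℓ, k ≥ 2`, the length of the shortest negative cycle — a cycle whose sign,
the product of its edge signs, is negative, i.e. one with an odd number of negative edges —
of the signed graph `BQ̂(ℓ, 2k+1)` equals `min (2ℓ) (2k+2)`. -/
theorem negGirth_BQOdd (ℓ k : ℕ) (hℓ : 2 ≤ ℓ) (hk : 2 ≤ k) :
    IsLeast {L : ℕ | ∃ (v : Option (Fin ℓ × ZMod (2 * k + 1))) (w : (BQOdd ℓ k).Walk v v),
        w.IsCycle ∧ Odd (negEdgeCount (bqOddPos ℓ k) w) ∧ w.length = L}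
      (min (2 * ℓ) (2 * k + 2)) := by
  refine ⟨?_, fun L ⟨v, w, _, hodd, hL⟩ => hL ▸ BQOdd.min_le_length w hodd⟩
  rcases le_total (2 * ℓ) (2 * k + 2) with h | h
  · obtain ⟨v, w, hw, hodd, hlen⟩ := BQOdd.exists_negCycle_length_eq_two_mul hℓ (by omega : 1 ≤ k)
    exact ⟨v, w, hw, hodd, by rw [hlen, min_eq_left h]⟩
  · obtain ⟨v, w, hw, hodd, hlen⟩ :=
      BQOdd.exists_negCycle_length_eq_two_mul_add_two hℓ (by omega : 1 ≤ k)
    exact ⟨v, w, hw, hodd, by rw [hlen, min_eq_right h]⟩
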